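/- Suppose G is the complete directed graph on a finite set X (all edges (x,y) with x ≠ y), α_x = α, β_x = β for all x with α ≤ β, λ_x = λ for all x, and k_a = 0, k_c = 1. Then an allocation state W is a Nash equilibrium if and only if W_y = Σ_x W_{xy} = α for every y ∈ X. -/
import Mathlib


open Finset

def col {X : Type*} [Fintype X] (W : X → X → ℕ) (y : X) : ℕ := ∑ x, W x y

def move {X : Type*} [DecidableEq X] (W : X → X → ℕ) (x y y' : X) : X → X → ℕ :=
  fun a b => (W a b + (if a = x ∧ b = y' then 1 else 0)) - (if a = x ∧ b = y then 1 else 0)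

/-- Utility for the homogeneous complete-graph case with `k_c = 1`, `k_a = 0`:
`f_{xy}(W) = λ - W_y / β`. -/
noncomputable def util {X : Type*} [Fintype X] (lam : ℝ) (β : ℕ)
    (W : X → X → ℕ) (y : X) : ℝ :=
  lam - (col W y : ℝ) / (β : ℝ)

lemma col_move_ne {X : Type*} [Fintype X] [DecidableEq X] (W : X → X → ℕ)
    (x y y' : X) (h : y ≠ y') : col (move W x y y') y' = col W y' + 1 := by
  unfold col move
  have key : ∀ a : X, (W a y' + (if a = x ∧ y' = y' then 1 else 0))
      - (if a = x ∧ y' = y then 1 else 0) = W a y' + (if a = x then 1 else 0) := by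
    intro a
    simp [Ne.symm h]
  rw [Finset.sum_congr rfl (fun a _ => key a), Finset.sum_add_distrib]
  simp

lemma col_move_eq {X : Type*} [Fintype X] [DecidableEq X] (W : X → X → ℕ)
    (x y : X) : col (move W x y y) y = col W y := by
  unfold col move
  apply Finset.sum_congr rfl
  intro a _
  simp

/-- Homogeneous complete-graph case, `k_a = 0`, `k_c = 1`: an allocation state `W`
is a Nash equilibrium iff every column sum equals `α`. -/
theorem nash_iff_balanced_homogeneous {X : Type*} [Fintype X] [DecidableEq X]
    (α β : ℕ) (lam : ℝ) (hαβ : α ≤ β) (hcard : 2 ≤ Fintype.card X)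
    (W : X → X → ℕ)
    (hdiag : ∀ x, W x x = 0)
    (hrow : ∀ x, ∑ y, W x y = α)
    (hcol : ∀ y, col W y ≤ β) :
    (∀ x y y', y ≠ x → 0 < W x y → y' ≠ x → col W y' < β →
        util lam β (move W x y y') y' ≤ util lam β W y) ↔
    (∀ y, col W y = α) := by
  have hsum : ∑ y, col W y = Fintype.card X * α := by
    unfold col
    rw [Finset.sum_comm]
    simp [hrow, Finset.card_univ, mul_comm]
  constructor
  · intro h
    by_contra hne
    push_neg at hne
    obtain ⟨y₀, hy₀⟩ := hne
    -- there is a big column and a small column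
    have hbig : ∃ y, α < col W y := by
      by_contra h'
      push_neg at h'
      rcases lt_or_gt_of_ne hy₀ with hlt | hgt
      · have : ∑ y, col W y < ∑ _y : X, α := by
          apply Finset.sum_lt_sum (fun i _ => h' i) ⟨y₀, Finset.mem_univ _, hlt⟩
        simp [hsum, Finset.card_univ, mul_comm] at this
      · exact absurd (h' y₀) (not_le.mpr hgt)
    have hsmall : ∃ y', col W y' < α := by
      by_contra h'
      push_neg at h'
      rcases lt_or_gt_of_ne hy₀ with hlt | hgt
      · exact absurd (h' y₀) (not_le.mpr hlt)
      · have : ∑ _y : X, α < ∑ y, col W y := by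
          apply Finset.sum_lt_sum (fun i _ => h' i) ⟨y₀, Finset.mem_univ _, hgt⟩
        simp [hsum, Finset.card_univ, mul_comm] at this
    obtain ⟨y, hy⟩ := hbig
    obtain ⟨y', hy'⟩ := hsmall
    have hyy' : y ≠ y' := fun hh => absurd (hh ▸ hy) (not_lt.mpr hy'.le)
    -- find a contributor a ≠ y' of column y
    have h1 : ∑ a ∈ univ.erase y', W a y + W y' y = col W y :=
      Finset.sum_erase_add univ _ (Finset.mem_univ y')
    have hWy'y : W y' y ≤ α := by
      rw [← hrow y']
      exact Finset.single_le_sum (fun i _ => Nat.zero_le _) (Finset.mem_univ y)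
    have h2 : ∑ a ∈ univ.erase y', W a y ≠ 0 := by omega
    obtain ⟨a, ha, hW0⟩ := Finset.exists_ne_zero_of_sum_ne_zero h2
    have hay' : a ≠ y' := Finset.ne_of_mem_erase ha
    have hWa : 0 < W a y := Nat.pos_of_ne_zero hW0
    have hya : y ≠ a := by
      intro hh
      rw [hh] at hWa
      simp [hdiag] at hWa
    have hβpos : 0 < β := lt_of_lt_of_le (lt_of_le_of_lt (Nat.zero_le α) hy) (hcol y)
    have hU := h a y y' hya hWa (Ne.symm hay') (lt_of_lt_of_le hy' hαβ)
    unfold util at hU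
    rw [sub_le_sub_iff_left, div_le_div_iff_of_pos_right (by exact_mod_cast hβpos),
      Nat.cast_le, col_move_ne W a y y' hyy'] at hU
    omega
  · intro hall x y y' hyx hW hy'x hcolβ
    unfold util
    rw [sub_le_sub_iff_left]
    rcases Nat.eq_zero_or_pos β with hβ | hβ
    · simp [hβ]
    · rw [div_le_div_iff_of_pos_right (by exact_mod_cast hβ), Nat.cast_le]
      by_cases hyy' : y = y'
      · subst hyy'
        rw [col_move_eq]
      · rw [col_move_ne W x y y' hyy', hall y, hall y']
        omega
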